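/- For all n ≥ 1, r ≥ 1 and k ≥ 2, t(n,k,r) = ∑_{a ≥ r} (-1)^{a-r} e_{a-r}(1,2,…,a-1) · ∑_{λ ⊢ n, l(λ)=a} f_λ ∏_{j=1}^{l(λ)} t(λ_j, k-1, 1), where the inner sum is over integer partitions λ of n of length a and e_m denotes the elementary symmetric polynomial of degree m evaluated at 1,2,…,a-1. -/

import Mathlib

open Finset

/-- Stirling numbers of the second kind: the number of partitions (equivalence
relations) of an `n`-element set into `r` nonempty blocks. -/
noncomputable def stirS2 (n r : ℕ) : ℕ :=
  Nat.card {p : Setoid (Fin n) // Nat.card (Quotient p) = r}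

/-- Signed Stirling numbers of the first kind, defined by
`x(x-1)⋯(x-n+1) = ∑_{r=0}^{n} s(n,r) xʳ`. -/
noncomputable def stirS1 (n r : ℕ) : ℤ :=
  (∏ i ∈ Finset.range n, (Polynomial.X - Polynomial.C (i : ℤ))).coeff r

/-- `Tnum n k r = T(n,k,r) = ∑_{n ≥ i_1 ≥ … ≥ i_{k-1} ≥ r} ∏_{j=1}^{k} S(i_{j-1}, i_j)`
(with `i_0 = n`, `i_k = r`), written via the equivalent recursion on `k`. -/
noncomputable def Tnum : ℕ → ℕ → ℕ → ℕ
  | n, 0, r => if n = r then 1 else 0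
  | n, k + 1, r => ∑ m ∈ Finset.Icc r n, stirS2 n m * Tnum m k r

/-- `tnum n k r = t(n,k,r) = ∑_{n ≥ i_1 ≥ … ≥ i_{k-1} ≥ r} ∏_{j=1}^{k} s(i_{j-1}, i_j)`
(with `i_0 = n`, `i_k = r`), written via the equivalent recursion on `k`. -/
noncomputable def tnum : ℕ → ℕ → ℕ → ℤ
  | n, 0, r => if n = r then 1 else 0
  | n, k + 1, r => ∑ m ∈ Finset.Icc r n, stirS1 n m * tnum m k r

/-- `f_λ = n! / (∏_j (j!)^{m_j} · m_j!)` where `m_j` is the multiplicity of the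
part `j` in the integer partition `λ` of `n`. -/
noncomputable def fPart (n : ℕ) (P : Nat.Partition n) : ℚ :=
  (n.factorial : ℚ) /
    ∏ j ∈ Finset.range (n + 1),
      ((j.factorial : ℚ) ^ (P.parts.count j) * ((P.parts.count j).factorial : ℚ))

/-- `g_λ = (l(λ) - 1)! · f_λ`. -/
noncomputable def gPart (n : ℕ) (P : Nat.Partition n) : ℚ :=
  ((Multiset.card P.parts - 1).factorial : ℚ) * fPart n P

/-- The elementary symmetric polynomial `e_m(1, 2, …, N)`. -/
noncomputable def esymQ (m N : ℕ) : ℚ :=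
  ∑ s ∈ Finset.powersetCard m (Finset.Icc 1 N), ∏ i ∈ s, (i : ℚ)

/-!
Let `G_k = ∑ₙ t(n,k,1) Xⁿ/n!`. Since `∑ₙ s(n,m) Xⁿ/n! = log(1+X)^m/m!`, the recursion defining
`t` becomes substitution of `log(1+X)`, which is a ring homomorphism; hence
`∑ₙ t(n,k,a) Xⁿ/n! = G_k^a/a!`.

Removing one part `v` from a partition `λ ⊢ n` changes `f_λ` by `m_v f_λ = C(n,v) f_{λ∖v}`; this
gives both sides of `t(n,k-1,a) = ∑_{λ ⊢ n, l(λ) = a} f_λ ∏ⱼ t(λⱼ,k-1,1)` the recursion in `a`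
coming from `G^a = G · G^{a-1}`.

Finally, peeling the last Stirling factor off the iterated sum gives
`t(n,k,r) = ∑ₐ t(n,k-1,a) s(a,r)`, and `s(a,r) = (-1)^{a-r} e_{a-r}(1,…,a-1)` by Vieta.
-/

open PowerSeries
open scoped Nat

lemma stirS1_of_lt {n r : ℕ} (h : n < r) : stirS1 n r = 0 := by
  refine Polynomial.coeff_eq_zero_of_natDegree_lt (lt_of_le_of_lt ?_ h)
  refine (Polynomial.natDegree_prod_le _ _).trans ?_
  simp only [Polynomial.natDegree_X_sub_C, Finset.sum_const, Finset.card_range, smul_eq_mul,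
    mul_one, le_refl]

lemma stirS1_succ_succ (n r : ℕ) :
    stirS1 (n + 1) (r + 1) = stirS1 n r - n * stirS1 n (r + 1) := by
  rw [stirS1, Finset.prod_range_succ, Polynomial.coeff_mul_X_sub_C, ← stirS1, ← stirS1]
  ring

lemma stirS1_zero_left (r : ℕ) : stirS1 0 r = if r = 0 then 1 else 0 := by
  simp [stirS1, Polynomial.coeff_one]

lemma stirS1_zero_right {n : ℕ} (hn : n ≠ 0) : stirS1 n 0 = 0 := by
  rw [stirS1, Polynomial.coeff_zero_eq_eval_zero, Polynomial.eval_prod]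
  exact Finset.prod_eq_zero (Finset.mem_range.mpr (Nat.pos_of_ne_zero hn)) (by simp)

lemma stirS1_eq_esymQ {a r : ℕ} (hr : 1 ≤ r) (h : r ≤ a) :
    (stirS1 a r : ℚ) = (-1) ^ (a - r) * esymQ (a - r) (a - 1) := by
  obtain ⟨r, rfl⟩ := Nat.exists_eq_add_of_le' hr
  obtain ⟨a, rfl⟩ := Nat.exists_eq_add_of_le' (hr.trans h)
  have hprod : ∏ i ∈ Finset.range a, (Polynomial.X - Polynomial.C ((i + 1 : ℕ) : ℤ)) =
      (((Finset.Icc 1 a).val.map (Nat.cast : ℕ → ℤ)).map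
        fun t => Polynomial.X - Polynomial.C t).prod := by
    rw [Multiset.map_map, ← Finset.prod_eq_multiset_prod, Finset.range_eq_Ico,
      Finset.prod_Ico_add' (fun i : ℕ => Polynomial.X - Polynomial.C (i : ℤ))]
    rfl
  rw [stirS1, Finset.prod_range_succ', Nat.cast_zero, map_zero, sub_zero,
    Polynomial.coeff_mul_X, hprod, Multiset.prod_X_sub_C_coeff _ (by simp; omega)]
  simp [esymQ, Finset.esymm_map_val]

lemma one_add_X_mul_derivative_log {A : Type*} [CommRing A] [Algebra ℚ A] :
    (1 + X) * d⁄dX A (log A) = 1 := by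
  ext (_ | n)
  · simp [deriv_log]
  · simp [add_mul, deriv_log, coeff_succ_X_mul, pow_succ]

lemma coeff_log_pow_succ_succ (m n : ℕ) :
    ((n : ℚ) + 1) * coeff (n + 1) (log ℚ ^ (m + 1)) =
      ((m : ℚ) + 1) * coeff n (log ℚ ^ m) - n * coeff n (log ℚ ^ (m + 1)) := by
  have hderiv : (1 + X) * d⁄dX ℚ (log ℚ ^ (m + 1)) = C ((m : ℚ) + 1) * log ℚ ^ m := by
    rw [Derivation.leibniz_pow, Nat.add_sub_cancel, smul_eq_mul, nsmul_eq_mul, map_add, map_one,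
      map_natCast]
    push_cast
    linear_combination ((m : ℚ⟦X⟧) + 1) * log ℚ ^ m * one_add_X_mul_derivative_log (A := ℚ)
  have h := congrArg (coeff n) hderiv
  rw [coeff_C_mul, add_mul, one_mul, map_add, coeff_derivative] at h
  rcases n with _ | n
  · simp only [coeff_zero_X_mul] at h
    push_cast at h ⊢
    linarith
  · rw [coeff_succ_X_mul, coeff_derivative] at h
    push_cast at h ⊢
    linarith

theorem factorial_mul_stirS1 (n m : ℕ) :
    (m ! : ℚ) * stirS1 n m = n ! * coeff n (log ℚ ^ m) := by
  induction n generalizing m with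
  | zero =>
    rcases m with _ | m
    · simp [stirS1_zero_left]
    · simp [stirS1_zero_left, coeff_zero_eq_constantCoeff]
  | succ n ih =>
    rcases m with _ | m
    · simp [stirS1_zero_right, coeff_one]
    · have h1 := ih m
      have h2 := ih (m + 1)
      have h3 := coeff_log_pow_succ_succ m n
      rw [stirS1_succ_succ n m]
      push_cast [Nat.factorial_succ] at h1 h2 ⊢
      linear_combination ((m : ℚ) + 1) * h1 - (n : ℚ) * h2 - (n ! : ℚ) * h3

lemma coeff_pow_of_lt {A : Type*} [Semiring A] {f : A⟦X⟧} (hf : constantCoeff f = 0) {n m : ℕ}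
    (h : n < m) : coeff n (f ^ m) = 0 :=
  coeff_of_lt_order _ ((Nat.cast_lt.2 h).trans_le (le_order_pow_of_constantCoeff_eq_zero m hf))

theorem factorial_mul_coeff_subst_log (F : ℚ⟦X⟧) (n : ℕ) :
    (n ! : ℚ) * coeff n (F.subst (log ℚ)) =
      ∑ m ∈ Finset.range (n + 1), stirS1 n m * (m ! * coeff m F) := by
  rw [coeff_subst' HasSubst.log, finsum_eq_sum_of_support_subset (s := Finset.range (n + 1)),
    Finset.mul_sum]
  · refine Finset.sum_congr rfl fun m _ => ?_
    rw [smul_eq_mul]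
    linear_combination -coeff m F * factorial_mul_stirS1 n m
  · intro m hm
    by_contra hmn
    rw [Finset.coe_range, Set.mem_Iio, not_lt] at hmn
    exact hm (by simp only [coeff_pow_of_lt constantCoeff_log (by omega : n < m), smul_zero])

noncomputable def egf (g : ℕ → ℚ) : ℚ⟦X⟧ :=
  mk fun i => g i / i !

lemma coeff_egf (g : ℕ → ℚ) (i : ℕ) : coeff i (egf g) = g i / i ! :=
  coeff_mk _ _

lemma tnum_of_lt {n r : ℕ} (k : ℕ) (h : n < r) : tnum n k r = 0 := by
  cases k with
  | zero => exact if_neg h.ne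
  | succ k => exact Finset.sum_eq_zero fun m hm => by simp at hm; omega

lemma tnum_succ_eq_sum_range (n k r : ℕ) :
    tnum n (k + 1) r = ∑ m ∈ Finset.range (n + 1), stirS1 n m * tnum m k r := by
  refine Finset.sum_subset (fun m hm => by simp at hm ⊢; omega) fun m hmn hm => ?_
  rw [tnum_of_lt k (by simp at hmn hm; omega), mul_zero]

lemma egf_tnum_succ (k a : ℕ) :
    egf (fun i => (tnum i (k + 1) a : ℚ)) = (egf fun i => (tnum i k a : ℚ)).subst (log ℚ) := by
  ext n
  rw [← mul_right_inj' (Nat.cast_ne_zero.2 n.factorial_ne_zero : (n ! : ℚ) ≠ 0),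
    factorial_mul_coeff_subst_log, coeff_egf, mul_div_cancel₀ _ (by positivity),
    tnum_succ_eq_sum_range]
  push_cast
  refine Finset.sum_congr rfl fun m _ => ?_
  rw [coeff_egf, mul_div_cancel₀ _ (by positivity)]

lemma factorial_smul_egf_tnum (k a : ℕ) :
    (a ! : ℚ) • egf (fun i => (tnum i k a : ℚ)) = egf (fun i => (tnum i k 1 : ℚ)) ^ a := by
  induction k generalizing a with
  | zero =>
    have hX : egf (fun i => (tnum i 0 1 : ℚ)) = X := by
      ext i
      rw [coeff_egf, coeff_X]
      split_ifs with h <;> simp [tnum, h]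
    ext n
    rw [hX, coeff_X_pow, coeff_smul, coeff_egf]
    by_cases h : n = a
    · subst h
      simp [tnum, Nat.factorial_ne_zero]
    · simp [tnum, h]
  | succ k ih =>
    rw [egf_tnum_succ, egf_tnum_succ, ← subst_smul HasSubst.log, ih, subst_pow HasSubst.log]

lemma factorial_mul_tnum (n k a : ℕ) :
    (a ! : ℚ) * tnum n k a = n ! * coeff n (egf (fun i => (tnum i k 1 : ℚ)) ^ a) := by
  rw [← factorial_smul_egf_tnum, coeff_smul, coeff_egf, smul_eq_mul]
  field_simp

noncomputable def partDenom (S : Finset ℕ) (s : Multiset ℕ) : ℚ :=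
  ∏ j ∈ S, ((j ! : ℚ) ^ s.count j * ((s.count j)! : ℚ))

lemma partDenom_cons {S : Finset ℕ} {v : ℕ} (hv : v ∈ S) (s : Multiset ℕ) :
    partDenom S (v ::ₘ s) = v ! * (s.count v + 1) * partDenom S s := by
  rw [partDenom, partDenom, ← Finset.mul_prod_erase S _ hv, ← Finset.mul_prod_erase S _ hv,
    Finset.prod_congr rfl fun j hj => by rw [Multiset.count_cons_of_ne (Finset.ne_of_mem_erase hj)],
    Multiset.count_cons_self, Nat.factorial_succ]
  push_cast
  ring

lemma partDenom_of_subset {S T : Finset ℕ} {s : Multiset ℕ} (hST : S ⊆ T) (hs : ∀ j ∈ s, j ∈ S) :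
    partDenom T s = partDenom S s := by
  refine (Finset.prod_subset hST fun j _ hj => ?_).symm
  rw [Multiset.count_eq_zero_of_notMem fun h => hj (hs j h)]
  simp

lemma fPart_eq_div_partDenom (n : ℕ) (P : n.Partition) :
    fPart n P = n ! / partDenom (Finset.range (n + 1)) P.parts :=
  rfl

lemma count_succ_mul_fPart {n m v : ℕ} {P : n.Partition} {Q : m.Partition}
    (h : P.parts = v ::ₘ Q.parts) :
    (Q.parts.count v + 1) * fPart n P = n.choose v * fPart m Q := by
  have hn : n = v + m := by rw [← P.parts_sum, h, Multiset.sum_cons, Q.parts_sum]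
  subst hn
  have hden : partDenom (Finset.range (v + m + 1)) Q.parts =
      partDenom (Finset.range (m + 1)) Q.parts :=
    partDenom_of_subset (Finset.range_subset_range.2 (by omega))
      fun j hj => Finset.mem_range.2 (Nat.lt_succ_of_le (Nat.Partition.le_of_mem_parts hj))
  have hchoose : ((v + m).choose v : ℚ) * v ! * m ! = (v + m)! := by
    rw [Nat.choose_symm_add]
    exact_mod_cast Nat.add_choose_mul_factorial_mul_factorial v m
  rw [fPart_eq_div_partDenom, fPart_eq_div_partDenom, h,
    partDenom_cons (Finset.mem_range.2 (by omega)), hden]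
  have : partDenom (Finset.range (m + 1)) Q.parts ≠ 0 :=
    Finset.prod_ne_zero_iff.2 fun j _ => by positivity
  field_simp
  linear_combination -hchoose

lemma sum_filter_mem_parts {M : Type*} [AddCommMonoid M] {n v : ℕ} (a : ℕ) (hv : 1 ≤ v)
    (hvn : v ≤ n) (H : n.Partition → M) :
    ∑ P ∈ Finset.univ.filter (fun P : n.Partition => Multiset.card P.parts = a + 1 ∧ v ∈ P.parts),
        H P =
      ∑ Q ∈ Finset.univ.filter (fun Q : (n - v).Partition => Multiset.card Q.parts = a),
        H ((Nat.Partition.partitionWithPartEquiv hv hvn).symm Q).1 := by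
  set e := Nat.Partition.partitionWithPartEquiv hv hvn
  refine Finset.sum_bij' (fun P hP => e ⟨P, (Finset.mem_filter.1 hP).2.2⟩) (fun Q _ => (e.symm Q).1)
    (fun P hP => ?_) (fun Q hQ => ?_) (fun P _ => by simp) (fun Q _ => by simp) (fun P _ => by simp)
  · obtain ⟨-, hcard, hvP⟩ := Finset.mem_filter.1 hP
    simp [e, Multiset.card_erase_of_mem hvP, hcard]
  · simpa [e] using hQ

lemma succ_mul_sum_partitions (g : ℕ → ℚ) (n a : ℕ) :
    ((a : ℚ) + 1) * ∑ P ∈ Finset.univ.filter (fun P : n.Partition => Multiset.card P.parts = a + 1),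
        fPart n P * (P.parts.map g).prod =
      ∑ v ∈ Finset.Icc 1 n, n.choose v * g v *
        ∑ Q ∈ Finset.univ.filter (fun Q : (n - v).Partition => Multiset.card Q.parts = a),
          fPart (n - v) Q * (Q.parts.map g).prod := by
  set T : ∀ {m : ℕ}, m.Partition → ℚ := fun {m} P => fPart m P * (P.parts.map g).prod
  -- double count the pairs `(λ, v)` with `v` a part of `λ`, weighted by the multiplicity of `v`
  have hcount : ∀ P ∈ Finset.univ.filter (fun P : n.Partition => Multiset.card P.parts = a + 1),
      ((a : ℚ) + 1) * T P = ∑ v ∈ P.parts.toFinset, (P.parts.count v : ℚ) * T P := by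
    intro P hP
    rw [← Finset.sum_mul, ← Nat.cast_sum, Multiset.toFinset_sum_count_eq,
      (Finset.mem_filter.1 hP).2]
    push_cast
    rfl
  rw [Finset.mul_sum, Finset.sum_congr rfl hcount]
  rw [Finset.sum_comm' (t' := Finset.Icc 1 n)
    (s' := fun v => Finset.univ.filter fun P : n.Partition =>
      Multiset.card P.parts = a + 1 ∧ v ∈ P.parts) fun P v => ?_]
  · refine Finset.sum_congr rfl fun v hv => ?_
    obtain ⟨hv1, hvn⟩ := Finset.mem_Icc.1 hv
    rw [sum_filter_mem_parts a hv1 hvn, Finset.mul_sum]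
    refine Finset.sum_congr rfl fun Q _ => ?_
    have hparts := Nat.Partition.partitionWithPartEquiv_symm_apply_parts hv1 hvn Q
    simp only [T, hparts, Multiset.count_cons_self, Multiset.map_cons, Multiset.prod_cons]
    push_cast
    linear_combination g v * (Q.parts.map g).prod * count_succ_mul_fPart hparts
  · simp only [Finset.mem_filter, Finset.mem_univ, true_and, Multiset.mem_toFinset,
      Finset.mem_Icc]
    constructor
    · rintro ⟨hcard, hv⟩
      exact ⟨⟨hcard, hv⟩, P.parts_pos hv, Nat.Partition.le_of_mem_parts hv⟩
    · rintro ⟨⟨hcard, hv⟩, -⟩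
      exact ⟨hcard, hv⟩

lemma factorial_mul_coeff_egf_mul (g : ℕ → ℚ) (F : ℚ⟦X⟧) (n : ℕ) :
    (n ! : ℚ) * coeff n (egf g * F) =
      ∑ v ∈ Finset.range (n + 1), n.choose v * g v * ((n - v)! * coeff (n - v) F) := by
  rw [coeff_mul, Finset.Nat.sum_antidiagonal_eq_sum_range_succ_mk, Finset.mul_sum]
  refine Finset.sum_congr rfl fun v hv => ?_
  have hchoose : (n.choose v : ℚ) * v ! * (n - v)! = n ! := by
    exact_mod_cast Nat.choose_mul_factorial_mul_factorial (Finset.mem_range_succ_iff.1 hv)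
  rw [coeff_egf]
  field_simp
  linear_combination -(g v * coeff (n - v) F) * hchoose

theorem factorial_mul_sum_partitions (g : ℕ → ℚ) (hg : g 0 = 0) (a n : ℕ) :
    (a ! : ℚ) * ∑ P ∈ Finset.univ.filter (fun P : n.Partition => Multiset.card P.parts = a),
        fPart n P * (P.parts.map g).prod =
      n ! * coeff n (egf g ^ a) := by
  induction a generalizing n with
  | zero =>
    rcases n with _ | n
    · simp [fPart]
    · rw [Finset.filter_false_of_mem fun P _ h => ?_]
      · simp [coeff_one]
      · have := P.parts_sum
        rw [Multiset.card_eq_zero.1 h] at this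
        simp at this
  | succ a ih =>
    rw [pow_succ', factorial_mul_coeff_egf_mul, Nat.factorial_succ, Nat.cast_mul,
      mul_comm _ (a ! : ℚ), mul_assoc, Nat.cast_succ, succ_mul_sum_partitions, Finset.mul_sum,
      ← Finset.sum_subset (s₁ := Finset.Icc 1 n) (s₂ := Finset.range (n + 1))
        (fun v hv => by simp at hv ⊢; omega) fun v hv hv' => ?_]
    · refine Finset.sum_congr rfl fun v _ => ?_
      rw [← ih]
      ring
    · obtain rfl : v = 0 := by simp at hv hv'; omega
      simp [hg]

lemma tnum_succ_eq_sum_tnum_mul_stirS1 (n k r : ℕ) :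
    tnum n (k + 1) r = ∑ a ∈ Finset.range (n + 1), tnum n k a * stirS1 a r := by
  induction k generalizing n with
  | zero =>
    rw [Finset.sum_eq_single_of_mem n (Finset.self_mem_range_succ n)
      fun a _ ha => by simp [tnum, Ne.symm ha]]
    simpa [tnum] using fun h => (stirS1_of_lt h).symm
  | succ k ih =>
    rw [tnum_succ_eq_sum_range]
    calc ∑ m ∈ Finset.range (n + 1), stirS1 n m * tnum m (k + 1) r
        = ∑ m ∈ Finset.range (n + 1), ∑ a ∈ Finset.range (n + 1),
            stirS1 n m * tnum m k a * stirS1 a r := by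
          refine Finset.sum_congr rfl fun m hm => ?_
          rw [ih, Finset.mul_sum]
          refine Finset.sum_subset (Finset.range_subset_range.2 (by simp at hm; omega))
            (fun a _ ha => ?_) |>.trans (Finset.sum_congr rfl fun a _ => by ring)
          rw [tnum_of_lt k (by simp at ha; omega), zero_mul, mul_zero]
      _ = ∑ a ∈ Finset.range (n + 1), tnum n (k + 1) a * stirS1 a r := by
          rw [Finset.sum_comm]
          simp only [tnum_succ_eq_sum_range, Finset.sum_mul]

theorem tnum_eq_sum_partitions (n k a : ℕ) :
    (tnum n k a : ℚ) =
      ∑ P ∈ Finset.univ.filter (fun P : n.Partition => Multiset.card P.parts = a),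
        fPart n P * (P.parts.map fun i => (tnum i k 1 : ℚ)).prod := by
  have hg : (tnum 0 k 1 : ℚ) = 0 := by rw [tnum_of_lt k one_pos, Int.cast_zero]
  rw [← mul_right_inj' (Nat.cast_ne_zero.2 a.factorial_ne_zero : (a ! : ℚ) ≠ 0),
    factorial_mul_tnum, factorial_mul_sum_partitions _ hg]

/-- Terms with `a > n` vanish (no partition of `n` has more than `n` parts), so the sum over
`a ≥ r` is taken over `r ≤ a ≤ n`. -/
theorem t_recurrence_esymm_general (n r k : ℕ) (hr : 1 ≤ r) (hk : 2 ≤ k) :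
    (tnum n k r : ℚ) =
      ∑ a ∈ Finset.Icc r n,
        (-1 : ℚ) ^ (a - r) * esymQ (a - r) (a - 1) *
          ∑ P ∈ Finset.univ.filter (fun P : Nat.Partition n => Multiset.card P.parts = a),
            fPart n P * (P.parts.map fun i => (tnum i (k - 1) 1 : ℚ)).prod := by
  obtain ⟨j, rfl⟩ : ∃ j, k = j + 1 := ⟨k - 1, by omega⟩
  rw [Nat.add_sub_cancel, tnum_succ_eq_sum_tnum_mul_stirS1, Int.cast_sum,
    ← Finset.sum_subset (s₁ := Finset.Icc r n) (fun a ha => by simp at ha ⊢; omega)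
      fun a hmem ha => ?_]
  · refine Finset.sum_congr rfl fun a ha => ?_
    rw [Int.cast_mul, tnum_eq_sum_partitions, stirS1_eq_esymQ hr (Finset.mem_Icc.1 ha).1, mul_comm]
  · simp [stirS1_of_lt (show a < r by simp at hmem ha; omega)]

/-- For `n, r ≥ 1` and `k ≥ 2`:
`t(n,k,r) = ∑_{a ≥ r} (-1)^{a-r} e_{a-r}(1,…,a-1)
              ∑_{λ ⊢ n, l(λ) = a} f_λ ∏_j t(λ_j, k-1, 1)`.
Terms with `a > n` vanish (there is no partition of `n` of length `> n`),
so the sum over `a ≥ r` is the sum over `r ≤ a ≤ n`. -/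
theorem t_recurrence_esymm (n r k : ℕ) (hn : 1 ≤ n) (hr : 1 ≤ r) (hk : 2 ≤ k) :
    (tnum n k r : ℚ) =
      ∑ a ∈ Finset.Icc r n,
        (-1 : ℚ) ^ (a - r) * esymQ (a - r) (a - 1) *
          ∑ P ∈ Finset.univ.filter (fun P : Nat.Partition n => Multiset.card P.parts = a),
            fPart n P * (P.parts.map fun i => (tnum i (k - 1) 1 : ℚ)).prod :=
  t_recurrence_esymm_general n r k hr hk
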